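/- Let A ∈ ℝ^{n×n} be invertible, W ∈ ℝ^{n×n} symmetric positive definite, and let S_1, …, S_r with S_i ∈ ℝ^{n×q_i} be a complete discrete sampling with probabilities p_i = ‖W^{1/2} A^T S_i‖_F² / ‖W^{1/2} A^T 𝐒‖_F², where 𝐒 = [S_1, …, S_r]. Set Z_i := A^T S_i (S_i^T A W A^T S_i)^{-1} S_i^T A and ρ := 1 − λ_min(W^{1/2} (Σ_{i=1}^r p_i Z_i) W^{1/2}). Then ρ ≤ 1 − λ_min(𝐒^T A W A^T 𝐒)/Tr(𝐒^T A W A^T 𝐒) = 1 − 1/κ_{2,F}²(W^{1/2} A^T 𝐒), and moreover κ_{2,F}(W^{1/2} A^T 𝐒) ≥ √n, i.e. Tr(𝐒^T A W A^T 𝐒) ≥ n·λ_min(𝐒^T A W A^T 𝐒). -/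

import Mathlib

/-!
Put `R = W^{1/2}`, `C_i = R Aᵀ S_i` and `B = R Aᵀ 𝐒 = [C_1, …, C_r]`. Then
`R (∑ p_i Z_i) R = ∑ p_i P_i` with `P_i = C_i (C_iᵀ C_i)⁻¹ C_iᵀ`, and `𝐒ᵀ A W Aᵀ 𝐒 = Bᵀ B`.
Since `C_iᵀ C_i ≤ ‖C_i‖_F² I`, we have `vᵀ P_i v ≥ |C_iᵀ v|² / ‖C_i‖_F²`, and the weights
`p_i = ‖C_i‖_F² / ‖B‖_F²` cancel these denominators:
`vᵀ (∑ p_i P_i) v ≥ |Bᵀ v|² / ‖B‖_F² ≥ λ_min (Bᵀ B) |v|² / Tr (Bᵀ B)`, where the last step uses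
that `B` has full row rank. The second claim is `Tr ≥ (number of columns of 𝐒) · λ_min ≥ n λ_min`.
-/

open Matrix BigOperators

/-- `Z = Aᵀ S (Sᵀ A W Aᵀ S)⁻¹ Sᵀ A`. -/
noncomputable def Zmat {n q : ℕ} (A W : Matrix (Fin n) (Fin n) ℝ)
    (S : Matrix (Fin n) (Fin q) ℝ) : Matrix (Fin n) (Fin n) ℝ :=
  Aᵀ * S * (Sᵀ * A * W * Aᵀ * S)⁻¹ * Sᵀ * A

/-- The concatenated matrix `𝐒 = [S_1, …, S_r]`, with columns indexed by `Σ i, Fin (q i)`. -/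
def bigS {n r : ℕ} (q : Fin r → ℕ) (S : ∀ i, Matrix (Fin n) (Fin (q i)) ℝ) :
    Matrix (Fin n) ((i : Fin r) × Fin (q i)) ℝ :=
  Matrix.of fun x j => S j.1 x j.2

/-- The Frobenius norm of a real matrix. -/
noncomputable def frob {m k : Type*} [Fintype m] [Fintype k] (M : Matrix m k ℝ) : ℝ :=
  Real.sqrt (∑ x, ∑ y, (M x y) ^ 2)

/-- The square root of a positive semidefinite matrix, as defined in the older Mathlib
(removed since). -/
noncomputable def Matrix.PosSemidef.sqrt {n : Type*} [Fintype n] [DecidableEq n]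
    {A : Matrix n n ℝ} (hA : A.PosSemidef) : Matrix n n ℝ :=
  hA.1.eigenvectorUnitary.1 * diagonal ((↑) ∘ (√·) ∘ hA.1.eigenvalues) *
    (star hA.1.eigenvectorUnitary : Matrix n n ℝ)

section Frobenius

variable {m k : Type*} [Fintype m] [Fintype k]

lemma frob_sq (M : Matrix m k ℝ) : frob M ^ 2 = ∑ x, ∑ y, M x y ^ 2 :=
  Real.sq_sqrt (by positivity)

lemma frob_transpose (M : Matrix m k ℝ) : frob Mᵀ = frob M := by
  rw [frob, frob, Finset.sum_comm]
  rfl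

lemma trace_transpose_mul_self_eq_frob_sq (M : Matrix m k ℝ) : (Mᵀ * M).trace = frob M ^ 2 := by
  rw [frob_sq, Finset.sum_comm]
  simp only [trace, diag, mul_apply, transpose_apply, sq]

lemma mulVec_dotProduct_mulVec_self_le (M : Matrix m k ℝ) (v : k → ℝ) :
    (M *ᵥ v) ⬝ᵥ (M *ᵥ v) ≤ frob M ^ 2 * (v ⬝ᵥ v) := by
  simp only [frob_sq, dotProduct, Finset.sum_mul, ← sq]
  refine Finset.sum_le_sum fun x _ => ?_
  rw [← Finset.sum_mul]
  simpa [mulVec, dotProduct] using Finset.sum_mul_sq_le_sq_mul_sq Finset.univ (M x) v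

end Frobenius

namespace Matrix

lemma mulVec_injective_of_rank_eq_card {m k K : Type*} [Fintype k] [Field K]
    {M : Matrix m k K} (h : M.rank = Fintype.card k) : Function.Injective M.mulVec := by
  have hker : Module.finrank K (LinearMap.ker M.mulVecLin) = 0 := by
    have := M.mulVecLin.finrank_range_add_finrank_ker
    rw [Module.finrank_fintype_fun_eq_card] at this
    unfold rank at h
    omega
  exact LinearMap.ker_eq_bot.mp (Submodule.finrank_eq_zero.mp hker)

lemma dotProduct_mul_transpose_mulVec {m k R : Type*} [Fintype m] [Fintype k] [CommSemiring R]
    (M : Matrix m k R) (v : m → R) : v ⬝ᵥ (M * Mᵀ) *ᵥ v = (Mᵀ *ᵥ v) ⬝ᵥ (Mᵀ *ᵥ v) := by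
  rw [← mulVec_mulVec, dotProduct_mulVec, ← mulVec_transpose]

end Matrix

namespace Matrix.IsHermitian

variable {k : Type*} [Fintype k] [DecidableEq k] {H : Matrix k k ℝ} (hH : H.IsHermitian)

lemma eigenvectorBasis_ne_zero (j : k) : ⇑(hH.eigenvectorBasis j) ≠ 0 := by
  simpa using hH.eigenvectorBasis.orthonormal.ne_zero j

lemma mul_dotProduct_self_le {c : ℝ} (hc : ∀ j, c ≤ hH.eigenvalues j) (v : k → ℝ) :
    c * (v ⬝ᵥ v) ≤ v ⬝ᵥ (H *ᵥ v) := by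
  have hpsd : (H - algebraMap ℝ _ c).PosSemidef := by
    refine posSemidef_iff_isHermitian_and_spectrum_nonneg.mpr
      ⟨hH.sub (IsSelfAdjoint.algebraMap _ (.all c)), ?_⟩
    rw [← spectrum.sub_singleton_eq, hH.spectrum_real_eq_range_eigenvalues]
    rintro _ ⟨_, ⟨j, rfl⟩, _, rfl, rfl⟩
    simpa using hc j
  simpa [Algebra.algebraMap_eq_smul_one, sub_mulVec, smul_mulVec, dotProduct_sub] using
    hpsd.dotProduct_mulVec_nonneg v

lemma iInf_eigenvalues_mul_dotProduct_self_le (v : k → ℝ) :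
    (⨅ j, hH.eigenvalues j) * (v ⬝ᵥ v) ≤ v ⬝ᵥ (H *ᵥ v) :=
  hH.mul_dotProduct_self_le (fun j => ciInf_le (Finite.bddBelow_range _) j) v

lemma iInf_eigenvalues_le_of_mulVec_eq_smul {w : k → ℝ} {c : ℝ} (hw : w ≠ 0)
    (hHw : H *ᵥ w = c • w) : ⨅ j, hH.eigenvalues j ≤ c := by
  have h := hH.iInf_eigenvalues_mul_dotProduct_self_le w
  rw [hHw, dotProduct_smul, smul_eq_mul] at h
  exact le_of_mul_le_mul_right h (dotProduct_self_star_pos_iff.mpr hw)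

lemma le_iInf_eigenvalues [Nonempty k] {c : ℝ}
    (hc : ∀ v : k → ℝ, c * (v ⬝ᵥ v) ≤ v ⬝ᵥ (H *ᵥ v)) : c ≤ ⨅ j, hH.eigenvalues j := by
  refine le_ciInf fun j => ?_
  have h := hc (hH.eigenvectorBasis j)
  rw [hH.mulVec_eigenvectorBasis j, dotProduct_smul, smul_eq_mul] at h
  exact le_of_mul_le_mul_right h
    (dotProduct_self_star_pos_iff.mpr (hH.eigenvectorBasis_ne_zero j))

lemma card_mul_iInf_eigenvalues_le_trace :
    Fintype.card k * ⨅ j, hH.eigenvalues j ≤ H.trace := by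
  rw [hH.trace_eq_sum_eigenvalues]
  simpa using Finset.card_nsmul_le_sum Finset.univ hH.eigenvalues _
    fun j _ => ciInf_le (Finite.bddBelow_range _) j

end Matrix.IsHermitian

namespace Matrix

variable {m k : Type*} [Fintype m] [Fintype k] [DecidableEq k]

/-- Every eigenvector `x` of `B * Bᵀ` yields the eigenvector `Bᵀ *ᵥ x ≠ 0` of `Bᵀ * B` with the
same eigenvalue, so `λ_min (Bᵀ * B) ≤ λ_min (B * Bᵀ)`. -/
lemma iInf_eigenvalues_mul_dotProduct_self_le_of_rank_eq_card [DecidableEq m] {B : Matrix m k ℝ}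
    (hB : B.rank = Fintype.card m) (hN : (Bᵀ * B).IsHermitian) (v : m → ℝ) :
    (⨅ j, hN.eigenvalues j) * (v ⬝ᵥ v) ≤ (Bᵀ *ᵥ v) ⬝ᵥ (Bᵀ *ᵥ v) := by
  have hBt : Function.Injective Bᵀ.mulVec :=
    mulVec_injective_of_rank_eq_card (by rw [rank_transpose, hB])
  have hG : (B * Bᵀ).IsHermitian := by
    simpa using isHermitian_mul_conjTranspose_self B
  have hle : ∀ j, ⨅ j, hN.eigenvalues j ≤ hG.eigenvalues j := by
    intro j
    refine hN.iInf_eigenvalues_le_of_mulVec_eq_smul (w := Bᵀ *ᵥ hG.eigenvectorBasis j) ?_ ?_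
    · exact fun h => hG.eigenvectorBasis_ne_zero j (hBt (h.trans (mulVec_zero _).symm))
    · rw [mulVec_mulVec, Matrix.mul_assoc, ← mulVec_mulVec, hG.mulVec_eigenvectorBasis j,
        mulVec_smul]
  simpa only [dotProduct_mul_transpose_mulVec] using hG.mul_dotProduct_self_le hle v

lemma transpose_mulVec_dotProduct_self_le {C : Matrix m k ℝ} (hC : C.rank = Fintype.card k)
    (v : m → ℝ) :
    (Cᵀ *ᵥ v) ⬝ᵥ (Cᵀ *ᵥ v) ≤ frob C ^ 2 * (v ⬝ᵥ (C * (Cᵀ * C)⁻¹ * Cᵀ) *ᵥ v) := by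
  have hX : IsUnit (Cᵀ * C).det := (isUnit_iff_isUnit_det _).mp <| mulVec_injective_iff_isUnit.mp
    (mulVec_injective_of_rank_eq_card (by rw [rank_transpose_mul_self, hC]))
  set w := (Cᵀ * C)⁻¹ *ᵥ (Cᵀ *ᵥ v)
  have hu : Cᵀ *ᵥ v = Cᵀ *ᵥ (C *ᵥ w) := by
    rw [mulVec_mulVec, mulVec_mulVec, mul_nonsing_inv _ hX, one_mulVec]
  have hCw : (C * (Cᵀ * C)⁻¹ * Cᵀ) *ᵥ v = C *ᵥ w := by
    simp only [w, mulVec_mulVec, Matrix.mul_assoc]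
  have hq : v ⬝ᵥ (C * (Cᵀ * C)⁻¹ * Cᵀ) *ᵥ v = (C *ᵥ w) ⬝ᵥ (C *ᵥ w) := by
    rw [hCw, dotProduct_mulVec, ← mulVec_transpose, hu, dotProduct_comm, dotProduct_mulVec,
      vecMul_transpose]
  rw [hq, hu]
  simpa [frob_transpose] using mulVec_dotProduct_mulVec_self_le Cᵀ (C *ᵥ w)

end Matrix

section Sampling

variable {n r : ℕ} {q : Fin r → ℕ}

lemma mul_bigS {m : ℕ} (M : Matrix (Fin m) (Fin n) ℝ)
    (S : ∀ i, Matrix (Fin n) (Fin (q i)) ℝ) : M * bigS q S = bigS q fun i => M * S i := by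
  ext x j
  simp [bigS, mul_apply]

lemma bigS_mul_transpose_bigS (S : ∀ i, Matrix (Fin n) (Fin (q i)) ℝ) :
    bigS q S * (bigS q S)ᵀ = ∑ i, S i * (S i)ᵀ := by
  ext x y
  simp [bigS, mul_apply, Matrix.sum_apply, Fintype.sum_sigma]

end Sampling

namespace Matrix.PosSemidef

variable {k : Type*} [Fintype k] [DecidableEq k] {W : Matrix k k ℝ} (hW : W.PosSemidef)

lemma transpose_sqrt : hW.sqrtᵀ = hW.sqrt := by
  simp [sqrt, transpose_mul, star_eq_conjTranspose, Matrix.mul_assoc]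

lemma sqrt_mul_sqrt : hW.sqrt * hW.sqrt = W := by
  have hU : star (hW.1.eigenvectorUnitary : Matrix k k ℝ) * hW.1.eigenvectorUnitary = 1 :=
    Unitary.star_mul_self_of_mem hW.1.eigenvectorUnitary.2
  have hD : diagonal (((↑) ∘ (√·) ∘ hW.1.eigenvalues) : k → ℝ) *
      diagonal ((↑) ∘ (√·) ∘ hW.1.eigenvalues) = diagonal hW.1.eigenvalues := by
    simp [diagonal_mul_diagonal, Real.mul_self_sqrt (hW.eigenvalues_nonneg _)]
  conv_rhs => rw [hW.1.spectral_theorem, Unitary.conjStarAlgAut_apply]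
  simp only [sqrt, Matrix.mul_assoc]
  rw [← Matrix.mul_assoc _ _ (diagonal _ * _), hU, Matrix.one_mul,
    ← Matrix.mul_assoc (diagonal _), hD]
  rfl

end Matrix.PosSemidef

section Weighted

variable {n : ℕ} {A W R : Matrix (Fin n) (Fin n) ℝ}

lemma weighted_gram_eq_transpose_mul_self (hR : Rᵀ = R) (hRR : R * R = W) {κ : Type*}
    [Fintype κ] (S : Matrix (Fin n) κ ℝ) :
    Sᵀ * A * W * Aᵀ * S = (R * Aᵀ * S)ᵀ * (R * Aᵀ * S) := by
  simp [← hRR, transpose_mul, hR, Matrix.mul_assoc]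

lemma mul_Zmat_mul_eq (hR : Rᵀ = R) (hRR : R * R = W) {q : ℕ} (S : Matrix (Fin n) (Fin q) ℝ) :
    R * Zmat A W S * R =
      R * Aᵀ * S * ((R * Aᵀ * S)ᵀ * (R * Aᵀ * S))⁻¹ * (R * Aᵀ * S)ᵀ := by
  rw [Zmat, weighted_gram_eq_transpose_mul_self hR hRR]
  simp [transpose_mul, hR, Matrix.mul_assoc]

end Weighted

theorem iInf_eigenvalues_div_frob_sq_mul_le {n r : ℕ} {q : Fin r → ℕ}
    (C : ∀ i, Matrix (Fin n) (Fin (q i)) ℝ) (hC : ∀ i, (C i).rank = q i)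
    (hfull : (bigS q C).rank = n) (hN : ((bigS q C)ᵀ * bigS q C).IsHermitian) (v : Fin n → ℝ) :
    (⨅ j, hN.eigenvalues j) / frob (bigS q C) ^ 2 * (v ⬝ᵥ v) ≤
      v ⬝ᵥ (∑ i, (frob (C i) ^ 2 / frob (bigS q C) ^ 2) •
        (C i * ((C i)ᵀ * C i)⁻¹ * (C i)ᵀ)) *ᵥ v := by
  have hsplit : ((bigS q C)ᵀ *ᵥ v) ⬝ᵥ ((bigS q C)ᵀ *ᵥ v) =
      ∑ i, ((C i)ᵀ *ᵥ v) ⬝ᵥ ((C i)ᵀ *ᵥ v) := by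
    simp only [← dotProduct_mul_transpose_mulVec, bigS_mul_transpose_bigS, sum_mulVec,
      dotProduct_sum]
  calc (⨅ j, hN.eigenvalues j) / frob (bigS q C) ^ 2 * (v ⬝ᵥ v)
      = (⨅ j, hN.eigenvalues j) * (v ⬝ᵥ v) / frob (bigS q C) ^ 2 := div_mul_eq_mul_div ..
    _ ≤ ((bigS q C)ᵀ *ᵥ v) ⬝ᵥ ((bigS q C)ᵀ *ᵥ v) / frob (bigS q C) ^ 2 := by
      gcongr
      exact iInf_eigenvalues_mul_dotProduct_self_le_of_rank_eq_card
        (by rw [hfull, Fintype.card_fin]) hN v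
    _ = ∑ i, ((C i)ᵀ *ᵥ v) ⬝ᵥ ((C i)ᵀ *ᵥ v) / frob (bigS q C) ^ 2 := by
      rw [hsplit, Finset.sum_div]
    _ ≤ ∑ i, frob (C i) ^ 2 / frob (bigS q C) ^ 2 *
          (v ⬝ᵥ (C i * ((C i)ᵀ * C i)⁻¹ * (C i)ᵀ) *ᵥ v) := by
      gcongr with i
      rw [div_mul_eq_mul_div]
      gcongr
      exact transpose_mulVec_dotProduct_self_le (by rw [hC, Fintype.card_fin]) v
    _ = _ := by
      simp only [sum_mulVec, dotProduct_sum, smul_mulVec, dotProduct_smul, smul_eq_mul]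

theorem stmt17_general {n r : ℕ} (hn : 0 < n) (A W : Matrix (Fin n) (Fin n) ℝ)
    (q : Fin r → ℕ)
    (S : ∀ i, Matrix (Fin n) (Fin (q i)) ℝ)
    (hA : IsUnit A.det) (hW : W.PosDef) (hS : ∀ i, (S i).rank = q i)
    -- complete discrete sampling: `𝐒` has full row rank
    (hfull : (bigS q S).rank = n)
    (p : Fin r → ℝ)
    (hp : ∀ i, p i = frob (hW.posSemidef.sqrt * Aᵀ * S i) ^ 2 /
      frob (hW.posSemidef.sqrt * Aᵀ * bigS q S) ^ 2)
    (hM : (hW.posSemidef.sqrt * (∑ i, p i • Zmat A W (S i)) *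
      hW.posSemidef.sqrt).IsHermitian)
    (hN : ((bigS q S)ᵀ * A * W * Aᵀ * bigS q S).IsHermitian) :
    1 - ⨅ j, hM.eigenvalues j ≤
      1 - (⨅ x, hN.eigenvalues x) / ((bigS q S)ᵀ * A * W * Aᵀ * bigS q S).trace ∧
    (n : ℝ) * (⨅ x, hN.eigenvalues x) ≤ ((bigS q S)ᵀ * A * W * Aᵀ * bigS q S).trace := by
  have : Nonempty (Fin n) := ⟨⟨0, hn⟩⟩
  set R := hW.posSemidef.sqrt
  have hR : Rᵀ = R := hW.posSemidef.transpose_sqrt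
  have hRR : R * R = W := hW.posSemidef.sqrt_mul_sqrt
  have hRA : IsUnit (R * Aᵀ).det := by
    have hWdet : IsUnit (R.det * R.det) := by
      rw [← det_mul, hRR]; exact hW.isUnit.map detMonoidHom
    rw [det_mul, det_transpose]
    exact (isUnit_of_mul_isUnit_left hWdet).mul hA
  set C := fun i => R * Aᵀ * S i
  have hB : R * Aᵀ * bigS q S = bigS q C := mul_bigS _ S
  have hC : ∀ i, (C i).rank = q i := fun i =>
    (rank_mul_eq_right_of_isUnit_det _ _ hRA).trans (hS i)
  have hBrank : (bigS q C).rank = n := by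
    rw [← hB, rank_mul_eq_right_of_isUnit_det _ _ hRA, hfull]
  have hMC : R * (∑ i, p i • Zmat A W (S i)) * R =
      ∑ i, (frob (C i) ^ 2 / frob (bigS q C) ^ 2) • (C i * ((C i)ᵀ * C i)⁻¹ * (C i)ᵀ) := by
    simp only [Matrix.mul_sum, Matrix.sum_mul, mul_smul_comm, smul_mul_assoc,
      mul_Zmat_mul_eq hR hRR, hp, hB]
    rfl
  generalize hNdef : (bigS q S)ᵀ * A * W * Aᵀ * bigS q S = N at hN ⊢
  rw [weighted_gram_eq_transpose_mul_self hR hRR, hB] at hNdef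
  subst hNdef
  constructor
  · rw [trace_transpose_mul_self_eq_frob_sq]
    refine sub_le_sub_left (hM.le_iInf_eigenvalues fun v => ?_) 1
    rw [hMC]
    exact iInf_eigenvalues_div_frob_sq_mul_le C hC hBrank hN v
  · have hμ : 0 ≤ ⨅ j, hN.eigenvalues j := by
      have hPSD := posSemidef_conjTranspose_mul_self (bigS q C)
      rw [conjTranspose_eq_transpose_of_trivial] at hPSD
      exact Real.iInf_nonneg hPSD.eigenvalues_nonneg
    calc (n : ℝ) * ⨅ j, hN.eigenvalues j
        ≤ Fintype.card ((i : Fin r) × Fin (q i)) * ⨅ j, hN.eigenvalues j := by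
          gcongr
          exact_mod_cast hfull ▸ rank_le_card_width (bigS q S)
      _ ≤ _ := hN.card_mul_iInf_eigenvalues_le_trace

theorem stmt17 {n r : ℕ} (hn : 0 < n) (A W : Matrix (Fin n) (Fin n) ℝ)
    (q : Fin r → ℕ) [Nonempty ((i : Fin r) × Fin (q i))]
    (S : ∀ i, Matrix (Fin n) (Fin (q i)) ℝ)
    (hA : IsUnit A.det) (hW : W.PosDef) (hS : ∀ i, (S i).rank = q i)
    -- complete discrete sampling: `𝐒` has full row rank
    (hfull : (bigS q S).rank = n)
    (p : Fin r → ℝ)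
    (hp : ∀ i, p i = frob (hW.posSemidef.sqrt * Aᵀ * S i) ^ 2 /
      frob (hW.posSemidef.sqrt * Aᵀ * bigS q S) ^ 2)
    (hM : (hW.posSemidef.sqrt * (∑ i, p i • Zmat A W (S i)) *
      hW.posSemidef.sqrt).IsHermitian)
    (hN : ((bigS q S)ᵀ * A * W * Aᵀ * bigS q S).IsHermitian) :
    1 - ⨅ j, hM.eigenvalues j ≤
      1 - (⨅ x, hN.eigenvalues x) / ((bigS q S)ᵀ * A * W * Aᵀ * bigS q S).trace ∧
    (n : ℝ) * (⨅ x, hN.eigenvalues x) ≤ ((bigS q S)ᵀ * A * W * Aᵀ * bigS q S).trace :=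
  stmt17_general hn A W q S hA hW hS hfull p hp hM hN
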